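/- Let k ≥ 3 be odd and let ρ ≥ 4 be an integer with 3(k-1) ≤ n' ≤ (k-1)^ρ - (k²-4k+2). Then the C_k-bootstrap process on the path P_{n'} reaches the complete graph K_{n'} within ρ steps. -/

import Mathlib

/-- One step of the `C_k`-bootstrap process: add every edge whose endpoints are
joined by a path of length `k-1` in the current graph. -/
def cycleStep (k : ℕ) {V : Type*} (G : SimpleGraph V) : SimpleGraph V where
  Adj u v := G.Adj u v ∨ (u ≠ v ∧ ∃ p : G.Walk u v, p.IsPath ∧ p.length = k - 1)
  symm := by
    constructor
    intro u v h
    rcases h with h | ⟨hne, p, hp, hl⟩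
    · exact Or.inl h.symm
    · exact Or.inr ⟨hne.symm, p.reverse, hp.reverse, by simpa using hl⟩
  loopless := by
    constructor
    intro v h
    rcases h with h | ⟨hne, _⟩
    · exact (G.ne_of_adj h) rfl
    · exact hne rfl

/-- The `C_k`-bootstrap process on `G`. -/
def cycleProcess (k : ℕ) {V : Type*} (G : SimpleGraph V) : ℕ → SimpleGraph V
  | 0 => G
  | (i + 1) => cycleStep k (cycleProcess k G i)

/-- walk along a chain list -/
lemma walk_of_chain' {V : Type*} (G : SimpleGraph V) :
    ∀ (l : List V) (hl : l ≠ []) (_ : l.Chain' G.Adj),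
    ∃ p : G.Walk (l.head hl) (l.getLast hl), p.support = l := by
  intro l
  induction l with
  | nil => intro hl; exact absurd rfl hl
  | cons a t ih =>
    intro _ hc
    match t, hc with
    | [], _ => exact ⟨SimpleGraph.Walk.nil, rfl⟩
    | b :: t', hc =>
      simp only [List.Chain'] at hc
      rw [List.isChain_cons_cons] at hc
      obtain ⟨p, hp⟩ := ih (by simp) hc.2
      refine ⟨SimpleGraph.Walk.cons hc.1 (p.copy rfl ?_), ?_⟩
      · exact (List.getLast_cons (by simp)).symm
      · simp [SimpleGraph.Walk.support_copy, hp]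
        exact (SimpleGraph.Walk.support_copy _ _ _).trans hp

open SimpleGraph

/-- `good k n' i d`: after `i` steps, all pairs at distance `d` are adjacent. -/
def good (k n' i d : ℕ) : Prop :=
  ∀ u v : Fin n', (u : ℕ) + d = (v : ℕ) →
    (cycleProcess k (SimpleGraph.pathGraph n') i).Adj u v

lemma good_mono {k n' i d : ℕ} (h : good k n' i d) : good k n' (i+1) d := by
  intro u v huv
  exact Or.inl (h u v huv)

lemma good_mono_le {k n' d : ℕ} {i j : ℕ} (hij : i ≤ j) (h : good k n' i d) :
    good k n' j d := by
  induction j with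
  | zero => simpa [Nat.le_zero.mp hij] using h
  | succ j ih =>
    rcases Nat.lt_or_ge i (j+1) with hl | hg
    · exact good_mono (ih (Nat.lt_succ_iff.mp hl))
    · simpa [Nat.le_antisymm hij hg] using h

lemma good_zero_one {k n' : ℕ} : good k n' 0 1 := by
  intro u v huv
  show (SimpleGraph.pathGraph n').Adj u v
  rw [SimpleGraph.pathGraph_adj]
  omega

/-- The main construction lemma: a path of length `k-1` described by a
position function `g` gives adjacency at the next stage. -/
lemma adj_of_g {k n' : ℕ} (hk : 3 ≤ k) (i : ℕ) (u v : Fin n') (g : ℕ → ℕ)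
    (h0 : g 0 = u) (hend : g (k-1) = v)
    (hlt : ∀ j, j ≤ k-1 → g j < n')
    (hinj : ∀ j1, j1 ≤ k-1 → ∀ j2, j2 ≤ k-1 → g j1 = g j2 → j1 = j2)
    (hstep : ∀ j, j < k-1 →
      (∃ d, 0 < d ∧ good k n' i d ∧ g (j+1) = g j + d) ∨
      (∃ d, 0 < d ∧ good k n' i d ∧ g j = g (j+1) + d)) :
    (cycleProcess k (SimpleGraph.pathGraph n') (i+1)).Adj u v := by
  set G := cycleProcess k (SimpleGraph.pathGraph n') i with hG
  -- the list of vertices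
  set f : ℕ → Fin n' := fun j => if h : j ≤ k-1 then ⟨g j, hlt j h⟩ else u with hf
  set l : List (Fin n') := (List.range k).map f with hl
  have hlnn : l ≠ [] := by
    simp [hl, List.range_eq_nil]; omega
  have hmem : ∀ j (hj : j < k), f j = ⟨g j, hlt j (by omega)⟩ := by
    intro j hj
    simp only [hf]
    rw [dif_pos (by omega)]
  have hchain : l.Chain' G.Adj := by
    simp only [List.Chain']
    rw [hl, List.isChain_map]
    have : k = (k-1) + 1 := by omega
    rw [this, List.isChain_range_succ]
    intro j hj
    rw [hmem j (by omega), hmem (j+1) (by omega)]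
    rcases hstep j hj with ⟨d, hd, hg, he⟩ | ⟨d, hd, hg, he⟩
    · exact hg _ _ (by simp [he])
    · exact (hg ⟨g (j+1), hlt _ (by omega)⟩ ⟨g j, hlt _ (by omega)⟩ (by simp [he])).symm
  have hnodup : l.Nodup := by
    refine List.Nodup.map_on ?_ (List.nodup_range (n := k))
    intro x hx y hy hxy
    rw [List.mem_range] at hx hy
    rw [hmem x hx, hmem y hy] at hxy
    exact hinj x (by omega) y (by omega) (by simpa using hxy)
  obtain ⟨p, hp⟩ := walk_of_chain' G l hlnn hchain
  have hgetl : ∀ (j:ℕ) (hj : j < l.length), l[j] = f j := by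
    intro j hj
    simp [hl]
  have hlen : l.length = k := by simp [hl]
  have hhead : l.head hlnn = u := by
    rw [List.head_eq_getElem, hgetl 0 (by omega), hmem 0 (by omega)]
    exact Fin.ext h0
  have hlast : l.getLast hlnn = v := by
    rw [List.getLast_eq_getElem, hgetl _ (by omega)]
    have : l.length - 1 = k - 1 := by omega
    rw [this, hmem (k-1) (by omega)]
    exact Fin.ext hend
  have hne : u ≠ v := by
    intro h
    have := hinj 0 (by omega) (k-1) (by omega) (by rw [h0, hend, h])
    omega
  refine Or.inr ⟨hne, ?_⟩
  obtain ⟨p', hp'⟩ : ∃ p' : G.Walk u v, p'.support = l := by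
    refine ⟨(p.copy hhead hlast), by simpa using hp⟩
  refine ⟨p', ?_, ?_⟩
  · rw [SimpleGraph.Walk.isPath_def, hp']; exact hnodup
  · have := p'.length_support
    rw [hp'] at this
    have hll : l.length = k := by simp [hl]
    omega

/-- Partial sums of a list of positives are strictly monotone. -/
lemma take_sum_lt (L : List ℕ) (hpos : ∀ d ∈ L, 0 < d) :
    ∀ j1 j2, j1 < j2 → j2 ≤ L.length → (L.take j1).sum < (L.take j2).sum := by
  intro j1 j2 h12 h2
  induction j2 with
  | zero => omega
  | succ j2 ih =>
    have hj2 : j2 < L.length := by omega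
    have hs : (L.take (j2+1)).sum = (L.take j2).sum + L.get ⟨j2, hj2⟩ :=
      List.sum_take_succ L j2 hj2
    have hpos' : 0 < L.get ⟨j2, hj2⟩ := hpos _ (L.get_mem _)
    rcases Nat.lt_or_ge j1 j2 with h | h
    · have := ih h (by omega)
      omega
    · have : j1 = j2 := by omega
      subst this
      omega

lemma take_sum_le (L : List ℕ) (j : ℕ) : (L.take j).sum ≤ L.sum := by
  conv_rhs => rw [← List.take_append_drop j L]
  rw [List.sum_append]
  omega

/-- Sum of `k-1` good positive distances is good at the next stage. -/
lemma good_sum {k n' : ℕ} (hk : 3 ≤ k) (i : ℕ) (L : List ℕ) (hlen : L.length = k - 1)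
    (hL : ∀ d ∈ L, 0 < d ∧ good k n' i d) : good k n' (i+1) L.sum := by
  intro u v huv
  have hpos : ∀ d ∈ L, 0 < d := fun d hd => (hL d hd).1
  refine adj_of_g hk i u v (fun j => u + (L.take j).sum) (by simp) ?_ ?_ ?_ ?_
  · rw [← hlen, List.take_length, huv]
  · intro j hj
    have := take_sum_le L j
    omega
  · intro j1 h1 j2 h2 he
    by_contra hne
    rcases Nat.lt_or_ge j1 j2 with h | h
    · have := take_sum_lt L hpos j1 j2 h (by omega); omega
    · have := take_sum_lt L hpos j2 j1 (by omega) (by omega); omega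
  · intro j hj
    have hj' : j < L.length := by omega
    refine Or.inl ⟨L.get ⟨j, hj'⟩, hpos _ (L.get_mem _), (hL _ (L.get_mem _)).2, ?_⟩
    rw [List.sum_take_succ L j hj']
    simp [List.get_eq_getElem]
    omega

/-- distribute `T ≤ m*B` into `m` parts each `≤ B`. -/
lemma exists_distrib (m B T : ℕ) (h : T ≤ m * B) :
    ∃ L : List ℕ, L.length = m ∧ (∀ e ∈ L, e ≤ B) ∧ L.sum = T := by
  induction m generalizing T with
  | zero => exact ⟨[], rfl, by simp, by simp; omega⟩
  | succ m ih =>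
    obtain ⟨L, h1, h2, h3⟩ := ih (T := T - min B T) (by rw [Nat.succ_mul] at h; omega)
    refine ⟨min B T :: L, by simp [h1], ?_, by simp only [List.sum_cons, h3]; omega⟩
    intro e he
    rcases List.mem_cons.mp he with rfl | he
    · omega
    · exact h2 e he

/-- representation Y = P * c + t with bounded P and t ∈ [1, A]. -/
lemma exists_rep (c A : ℕ) (hA : c ≤ A) (hc : 1 ≤ c) :
    ∀ Pmax Y, 1 ≤ Y → Y ≤ Pmax * c + A →
    ∃ P t, P ≤ Pmax ∧ 1 ≤ t ∧ t ≤ A ∧ Y = P * c + t := by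
  intro Pmax
  induction Pmax with
  | zero => intro Y h1 h2; exact ⟨0, Y, by omega, by omega, by omega, by omega⟩
  | succ Pmax ih =>
    intro Y h1 h2
    rcases le_or_gt Y (Pmax * c + A) with h | h
    · obtain ⟨P, t, hP, ht1, ht2, he⟩ := ih Y h1 h
      exact ⟨P, t, by omega, ht1, ht2, he⟩
    · obtain ⟨P, t, hP, ht1, ht2, he⟩ := ih (Y - c) (by omega)
        (by rw [Nat.succ_mul] at h2; omega)
      refine ⟨P + 1, t, by omega, ht1, ht2, by rw [Nat.succ_mul]; omega⟩

lemma sum_map_affine (c s : ℕ) (L : List ℕ) :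
    (L.map (fun q => c + q * s)).sum = L.length * c + L.sum * s := by
  induction L with
  | nil => simp
  | cons a t ih => simp [ih]; ring

lemma hstep_of {k n' : ℕ} (i : ℕ) (h1 : good k n' i 1) (hk1 : good k n' i (k-1))
    (hk : 3 ≤ k) (g : ℕ → ℕ) (j : ℕ)
    (h : g (j+1) = g j + 1 ∨ g j = g (j+1) + 1 ∨
         g (j+1) = g j + (k-1) ∨ g j = g (j+1) + (k-1)) :
    (∃ d, 0 < d ∧ good k n' i d ∧ g (j+1) = g j + d) ∨
    (∃ d, 0 < d ∧ good k n' i d ∧ g j = g (j+1) + d) := by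
  rcases h with h|h|h|h
  exacts [Or.inl ⟨1, one_pos, h1, h⟩, Or.inr ⟨1, one_pos, h1, h⟩,
    Or.inl ⟨k-1, by omega, hk1, h⟩, Or.inr ⟨k-1, by omega, hk1, h⟩]

lemma good_one_one {k n' : ℕ} : good k n' 1 1 := good_mono good_zero_one

lemma good_one_big {k n' : ℕ} (hk : 3 ≤ k) : good k n' 1 (k-1) := by
  have := good_sum (n' := n') hk 0 (List.replicate (k-1) 1) (by simp)
    (fun d hd => by rw [List.eq_of_mem_replicate hd]; exact ⟨one_pos, good_zero_one⟩)
  simpa using this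

set_option maxHeartbeats 1000000 in
/-- Stage 2, odd distances. -/
lemma good_two_odd {k n' : ℕ} (hk : 3 ≤ k) (hn : 3*(k-1) ≤ n')
    (d a : ℕ) (ha : d = 2*a + 1) (hd2 : d ≤ 2*(k-1)) : good k n' 2 d := by
  have h1 : good k n' 1 1 := good_one_one
  have hk1 : good k n' 1 (k-1) := good_one_big hk
  intro u v huv
  have hv : (v:ℕ) < n' := v.isLt
  have hu : (u:ℕ) < n' := u.isLt
  show (cycleProcess k (SimpleGraph.pathGraph n') (1+1)).Adj u v
  set b := k - 2 - a with hb
  rcases le_or_gt n' ((u:ℕ) + a + k - 1) with hroom | hroom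
  · -- O' : needs u ≥ b
    set g : ℕ → ℕ := (fun j => if j ≤ b then (u:ℕ) - j else (u:ℕ) + d + j - (k-1)) with hg
    refine adj_of_g hk 1 u v g ?_ ?_ ?_ ?_ ?_
    · simp only [hg]; split_ifs <;> first | omega | exact (‹False›).elim
    · simp only [hg]; split_ifs <;> first | omega | exact (‹False›).elim
    · intro j hj; simp only [hg]; split_ifs <;> first | omega | exact (‹False›).elim
    · intro j1 hj1 j2 hj2 he; simp only [hg] at he; split_ifs at he <;> first | omega | exact (‹False›).elim
    · intro j hj
      refine hstep_of 1 h1 hk1 hk g j ?_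
      simp only [hg]; split_ifs <;> first | omega | exact (‹False›).elim
  · -- O
    set g : ℕ → ℕ := (fun j => if j ≤ a then (u:ℕ) + j else (u:ℕ) + a + (k-1) - (j - (a+1))) with hg
    refine adj_of_g hk 1 u v g ?_ ?_ ?_ ?_ ?_
    · simp only [hg]; split_ifs <;> first | omega | exact (‹False›).elim
    · simp only [hg]; split_ifs <;> first | omega | exact (‹False›).elim
    · intro j hj; simp only [hg]; split_ifs <;> first | omega | exact (‹False›).elim
    · intro j1 hj1 j2 hj2 he; simp only [hg] at he; split_ifs at he <;> first | omega | exact (‹False›).elim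
    · intro j hj
      refine hstep_of 1 h1 hk1 hk g j ?_
      simp only [hg]; split_ifs <;> first | omega | exact (‹False›).elim

set_option maxHeartbeats 1000000 in
/-- Stage 2, even distances below k-1. -/
lemma good_two_even_low {k n' : ℕ} (hk : 3 ≤ k) (hn : 3*(k-1) ≤ n')
    (d m c : ℕ) (hm : k = 2*m+1) (hc : d = c + c) (hd1 : 1 ≤ d) (hd2 : d ≤ k-3) :
    good k n' 2 d := by
  have h1 : good k n' 1 1 := good_one_one
  have hk1 : good k n' 1 (k-1) := good_one_big hk
  intro u v huv
  have hv : (v:ℕ) < n' := v.isLt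
  have hu : (u:ℕ) < n' := u.isLt
  show (cycleProcess k (SimpleGraph.pathGraph n') (1+1)).Adj u v
  set a := m - 1 + c with ha
  set b := m - 1 - c with hb
  rcases le_or_gt n' ((u:ℕ) + k - 1 + a) with hroom | hroom
  · -- mirrored: E-low', needs u ≥ b + k - 1
    set g : ℕ → ℕ := (fun j => if j ≤ b then (u:ℕ) - j else if j ≤ k-2 then (u:ℕ) + j - (2*b + k) else (u:ℕ) + d) with hg
    refine adj_of_g hk 1 u v g ?_ ?_ ?_ ?_ ?_
    · simp only [hg]; split_ifs <;> first | omega | exact (‹False›).elim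
    · simp only [hg]; split_ifs <;> first | omega | exact (‹False›).elim
    · intro j hj; simp only [hg]; split_ifs <;> first | omega | exact (‹False›).elim
    · intro j1 hj1 j2 hj2 he; simp only [hg] at he; split_ifs at he <;> first | omega | exact (‹False›).elim
    · intro j hj
      refine hstep_of 1 h1 hk1 hk g j ?_
      simp only [hg]; split_ifs <;> first | omega | exact (‹False›).elim
  · -- E-low
    set g : ℕ → ℕ := (fun j => if j = 0 then (u:ℕ) else if j ≤ a+1 then (u:ℕ) + k - 2 + j else (u:ℕ) + 2*a + 2 - j) with hg
    refine adj_of_g hk 1 u v g ?_ ?_ ?_ ?_ ?_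
    · simp only [hg]; split_ifs <;> first | omega | exact (‹False›).elim
    · simp only [hg]; split_ifs <;> first | omega | exact (‹False›).elim
    · intro j hj; simp only [hg]; split_ifs <;> first | omega | exact (‹False›).elim
    · intro j1 hj1 j2 hj2 he; simp only [hg] at he; split_ifs at he <;> first | omega | exact (‹False›).elim
    · intro j hj
      refine hstep_of 1 h1 hk1 hk g j ?_
      simp only [hg]; split_ifs <;> first | omega | exact (‹False›).elim

set_option maxHeartbeats 1000000 in
/-- Stage 2, even distances above k-1. -/
lemma good_two_even_high {k n' : ℕ} (hk : 3 ≤ k) (hn : 3*(k-1) ≤ n')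
    (d m c : ℕ) (hm : k = 2*m+1) (hc : d = c + c) (hd1 : k+1 ≤ d) (hd2 : d ≤ 2*(k-1)) :
    good k n' 2 d := by
  have h1 : good k n' 1 1 := good_one_one
  have hk1 : good k n' 1 (k-1) := good_one_big hk
  intro u v huv
  have hv : (v:ℕ) < n' := v.isLt
  have hu : (u:ℕ) < n' := u.isLt
  show (cycleProcess k (SimpleGraph.pathGraph n') (1+1)).Adj u v
  set a := c - m - 1 with ha
  set b := k - 3 - a with hb
  rcases le_or_gt n' ((u:ℕ) + a + 2*k - 2) with hroom | hroom
  · -- mirrored E-high', needs u ≥ b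
    set g : ℕ → ℕ := (fun j => if j ≤ b then (u:ℕ) - j else if j = b+1 then (u:ℕ) + (k-1) - b else (u:ℕ) + (j + 2*k) - (2*b + 4)) with hg
    refine adj_of_g hk 1 u v g ?_ ?_ ?_ ?_ ?_
    · simp only [hg]; split_ifs <;> first | omega | exact (‹False›).elim
    · simp only [hg]; split_ifs <;> first | omega | exact (‹False›).elim
    · intro j hj; simp only [hg]; split_ifs <;> first | omega | exact (‹False›).elim
    · intro j1 hj1 j2 hj2 he; simp only [hg] at he; split_ifs at he <;> first | omega | exact (‹False›).elim
    · intro j hj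
      refine hstep_of 1 h1 hk1 hk g j ?_
      simp only [hg]; split_ifs <;> first | omega | exact (‹False›).elim
  · -- E-high
    set g : ℕ → ℕ := (fun j => if j ≤ a then (u:ℕ) + j else if j = a+1 then (u:ℕ) + a + k - 1 else (u:ℕ) + 2*a + 2*k - j) with hg
    refine adj_of_g hk 1 u v g ?_ ?_ ?_ ?_ ?_
    · simp only [hg]; split_ifs <;> first | omega | exact (‹False›).elim
    · simp only [hg]; split_ifs <;> first | omega | exact (‹False›).elim
    · intro j hj; simp only [hg]; split_ifs <;> first | omega | exact (‹False›).elim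
    · intro j1 hj1 j2 hj2 he; simp only [hg] at he; split_ifs at he <;> first | omega | exact (‹False›).elim
    · intro j hj
      refine hstep_of 1 h1 hk1 hk g j ?_
      simp only [hg]; split_ifs <;> first | omega | exact (‹False›).elim

/-- Stage 2, small distances. -/
lemma good_two_low {k n' : ℕ} (hk : 3 ≤ k) (hodd : Odd k) (hn : 3*(k-1) ≤ n')
    (d : ℕ) (hd1 : 1 ≤ d) (hd2 : d ≤ 2*(k-1)) : good k n' 2 d := by
  obtain ⟨m, hm⟩ := hodd
  rcases Nat.even_or_odd d with ⟨c, hc⟩ | ⟨a, ha⟩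
  · rcases le_or_gt d (k-3) with h | h
    · exact good_two_even_low hk hn d m c hm hc hd1 h
    · rcases le_or_gt d (k-1) with h2 | h2
      · have hd : d = k - 1 := by omega
        exact fun u v huv => good_mono (good_one_big hk) u v (by rw [← hd]; exact huv)
      · exact good_two_even_high hk hn d m c hm hc (by omega) hd2
  · exact good_two_odd hk hn d a (by omega) hd2

/-- Stage 2, top arithmetic progression: `(k-1) + p*(k-2)` for `p ≤ k-1`. -/
lemma good_two_top {k n' : ℕ} (hk : 3 ≤ k) (p : ℕ) (hp : p ≤ k-1) :
    good k n' 2 ((k-1) + p*(k-2)) := by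
  have hs := good_sum (n' := n') hk 1 (List.replicate p (k-1) ++ List.replicate (k-1-p) 1)
    (by simp; omega)
    (by
      intro d hd
      rcases List.mem_append.mp hd with h | h
      · rw [List.eq_of_mem_replicate h]; exact ⟨by omega, good_one_big hk⟩
      · rw [List.eq_of_mem_replicate h]; exact ⟨one_pos, good_one_one⟩)
  have : (List.replicate p (k-1) ++ List.replicate (k-1-p) 1).sum = (k-1) + p*(k-2) := by
    rw [List.sum_append, List.sum_replicate, List.sum_replicate, smul_eq_mul, smul_eq_mul]
    have : k - 1 = (k-2) + 1 := by omega
    rw [this]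
    have hp' : p ≤ (k-2) + 1 := by omega
    cases Nat.le.dest hp' with
    | intro q hq =>
      have e1 : k - 2 + 1 - p = q := by omega
      rw [e1, Nat.mul_one, Nat.mul_add, Nat.mul_one]
      omega
  rwa [this] at hs

/-- The complete-interval bound at stage `i`: `A i = (k-1)^i - (k-1)*(k-3)`. -/
lemma stage_induction {k n' : ℕ} (hk : 3 ≤ k) (hodd : Odd k) (hn : 3*(k-1) ≤ n') :
    ∀ i, 2 ≤ i →
      (∀ d, 1 ≤ d → d ≤ (k-1)^i - (k-1)*(k-3) → good k n' i d) ∧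
      (∀ p, p ≤ (k-1)^(i-1) → good k n' i ((k-1)^(i-1) + p*(k-2))) := by
  intro i hi
  induction i, hi using Nat.le_induction with
  | base =>
    constructor
    · intro d hd1 hd2
      have hsq : (k-1)^2 = (k-1)*(k-1) := sq (k-1)
      have hexp : (k-1)*(k-3) + 2*(k-1) = (k-1)*(k-1) := by
        have h3 : k - 1 = (k-3) + 2 := by omega
        calc (k-1)*(k-3) + 2*(k-1) = (k-1)*((k-3)+2) := by ring
        _ = (k-1)*(k-1) := by rw [← h3]
      refine good_two_low hk hodd hn d hd1 ?_
      omega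
    · intro p hp
      have : (k-1)^(2-1) = k-1 := pow_one _
      rw [this]
      exact good_two_top hk p (by omega)
  | succ i hi2 ih =>
    -- abbreviations
    set E := (k-1)^(i-1) with hE
    have hiexp : (k-1)^i = E * (k-1) := by
      rw [hE, ← pow_succ]
      congr 1
      omega
    have hi1exp : (k-1)^(i+1) = (k-1)^i * (k-1) := by rw [pow_succ]
    have hEpos : 1 ≤ E := Nat.one_le_pow _ _ (by omega)
    have hE1 : k - 1 ≤ E := by
      rw [hE]
      calc k - 1 = (k-1)^1 := (pow_one _).symm
      _ ≤ (k-1)^(i-1) := Nat.pow_le_pow_right (by omega) (by omega)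
    -- key algebra facts as linear relations between atoms
    have F2 : (k-1)^i = E * (k-2) + E := by
      rw [hiexp]
      have : k - 1 = (k-2) + 1 := by omega
      rw [this, Nat.mul_add, Nat.mul_one]
    have F1 : (k-1)^(i+1) = (k-1)^i * (k-2) + (k-1)^i := by
      rw [hi1exp]
      have : k - 1 = (k-2) + 1 := by omega
      rw [this, Nat.mul_add, Nat.mul_one]
    have F4 : (k-1)^i * (k-2) = E * (k-2) * (k-2) + E * (k-2) := by
      rw [F2, Nat.add_mul]
    have h2 : (k-1)*(k-3) ≤ E*(k-2) := Nat.mul_le_mul hE1 (by omega)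
    have hAlow : 2*(k-1) ≤ (k-1)^i - (k-1)*(k-3) := by
      have hx2 : (k-1)*(k-3) + 2*(k-1) = (k-1)*(k-1) := by
        have h3 : k - 1 = (k-3) + 2 := by omega
        calc (k-1)*(k-3) + 2*(k-1) = (k-1)*((k-3)+2) := by ring
        _ = (k-1)*(k-1) := by rw [← h3]
      have hx3 : (k-1)*(k-1) ≤ (k-1)^i := by
        calc (k-1)*(k-1) = (k-1)^2 := (sq (k-1)).symm
        _ ≤ (k-1)^i := Nat.pow_le_pow_right (by omega) hi2
      omega
    set A := (k-1)^i - (k-1)*(k-3) with hA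
    have hAiE : E ≤ A := by omega
    obtain ⟨hlow, htop⟩ := ih
    constructor
    · -- low range at stage i+1
      intro D hD1 hD2
      rcases le_or_gt D A with hc1 | hc1
      · exact good_mono (hlow D hD1 hc1)
      · rcases le_or_gt D ((k-1) * A) with hc2 | hc2
        · -- middle range: sum of k-1 elements of [1, A]
          have hAsplit : (k-1) * A = (k-1)*(A-1) + (k-1) := by
            conv_lhs => rw [show A = (A - 1) + 1 by omega]
            rw [Nat.mul_add, Nat.mul_one]
          obtain ⟨L, hL1, hL2, hL3⟩ := exists_distrib (k-1) (A-1) (D - (k-1)) (by omega)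
          have hs := good_sum (n' := n') hk i (L.map (fun q => 1 + q * 1)) (by simpa using hL1)
            (by
              intro e he
              obtain ⟨q, hq, rfl⟩ := List.mem_map.mp he
              exact ⟨by omega, hlow _ (by omega) (by have := hL2 q hq; omega)⟩)
          rw [sum_map_affine 1 1 L, hL1, hL3] at hs
          have heq : (k-1) * 1 + (D - (k-1)) * 1 = D := by omega
          rwa [heq] at hs
        · -- top-mixed range
          have hcEA : E*(k-2) ≤ (k-1)*A := by
            rw [Nat.mul_comm]
            exact Nat.mul_le_mul (by omega) hAiE
          set Y := D - E * (k-2) with hY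
          have hY1 : 1 ≤ Y := by omega
          have hYD : E * (k-2) + Y = D := by omega
          have hYup : Y ≤ E * (k-2) * (k-2) + A := by omega
          obtain ⟨P, t, hP, ht1, ht2, hrep⟩ :=
            exists_rep (k-2) A (by omega) (by omega) (E*(k-2)) Y hY1 hYup
          obtain ⟨L, hL1, hL2, hL3⟩ := exists_distrib (k-2) E P (by rw [Nat.mul_comm]; exact hP)
          have hs := good_sum (n' := n') hk i (L.map (fun q => E + q * (k-2)) ++ [t])
            (by simp [hL1]; omega)
            (by
              intro e he
              rcases List.mem_append.mp he with h | h
              · obtain ⟨q, hq, rfl⟩ := List.mem_map.mp h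
                exact ⟨by omega, htop q (hL2 q hq)⟩
              · rw [List.mem_singleton.mp h]
                exact ⟨by omega, hlow t ht1 ht2⟩)
          rw [List.sum_append, List.sum_singleton, sum_map_affine E (k-2) L, hL1, hL3] at hs
          have heq : (k-2) * E + P * (k-2) + t = D := by
            have h5 : P * (k-2) + t = Y := hrep.symm
            have hcomm : (k-2)*E = E*(k-2) := Nat.mul_comm _ _
            omega
          rwa [show (k-2) * E + P * (k-2) + t = D from heq] at hs
    · -- top progression at stage i+1
      intro p hp
      rw [show (i+1) - 1 = i from by omega] at hp ⊢
      obtain ⟨L, hL1, hL2, hL3⟩ := exists_distrib (k-1) E p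
        (by rw [Nat.mul_comm, ← hiexp]; exact hp)
      have hs := good_sum (n' := n') hk i (L.map (fun q => E + q * (k-2))) (by simpa using hL1)
        (by
          intro e he
          obtain ⟨q, hq, rfl⟩ := List.mem_map.mp he
          exact ⟨by omega, htop q (hL2 q hq)⟩)
      rw [sum_map_affine E (k-2) L, hL1, hL3] at hs
      rwa [show (k-1) * E + p * (k-2) = (k-1)^i + p*(k-2) by rw [hiexp, Nat.mul_comm E (k-1)]] at hs

/-- For odd `k ≥ 3` and `ρ ≥ 4` with `3(k-1) ≤ n' ≤ (k-1)^ρ - (k²-4k+2)`, the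
`C_k`-bootstrap process on `P_{n'}` reaches the complete graph within `ρ` steps. -/
theorem cycleProcess_path_complete (k n' ρ : ℕ) (hk : 3 ≤ k) (hodd : Odd k) (hρ : 4 ≤ ρ)
    (hlb : 3 * (k - 1) ≤ n')
    (hub : (n' : ℤ) ≤ ((k : ℤ) - 1) ^ ρ - ((k : ℤ) ^ 2 - 4 * k + 2)) :
    cycleProcess k (SimpleGraph.pathGraph n') ρ = ⊤ := by
  -- convert the upper bound to ℕ
  have hcast : ((k - 1 : ℕ) : ℤ) = (k : ℤ) - 1 := by
    have : (1:ℕ) ≤ k := by omega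
    push_cast [Nat.cast_sub this]
    ring
  have hcast2 : (((k-1) * (k-3) : ℕ) : ℤ) = ((k:ℤ) - 1) * ((k:ℤ) - 3) := by
    have h1 : (1:ℕ) ≤ k := by omega
    have h3 : (3:ℕ) ≤ k := hk
    push_cast [Nat.cast_sub h1, Nat.cast_sub h3]
    ring
  have hubZ : (n' : ℤ) + ((k-1) * (k-3) : ℕ) ≤ ((k-1 : ℕ) : ℤ)^ρ + 1 := by
    rw [hcast2, hcast]
    nlinarith [hub]
  have hubN : n' + (k-1) * (k-3) ≤ (k-1)^ρ + 1 := by exact_mod_cast hubZ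
  have hstage := (stage_induction (n' := n') hk hodd hlb ρ (by omega)).1
  ext u v
  simp only [SimpleGraph.top_adj]
  constructor
  · exact fun h => h.ne
  · intro hne
    have hne' : (u:ℕ) ≠ (v:ℕ) := fun h => hne (Fin.ext h)
    have key : ∀ (x y : Fin n'), (x:ℕ) < (y:ℕ) →
        (cycleProcess k (SimpleGraph.pathGraph n') ρ).Adj x y := by
      intro x y hxy
      set d := (y:ℕ) - (x:ℕ) with hd
      have hd1 : 1 ≤ d := by omega
      have hd2 : d ≤ (k-1)^ρ - (k-1)*(k-3) := by
        have hy : (y:ℕ) < n' := y.isLt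
        omega
      exact hstage d hd1 hd2 x y (by omega)
    rcases Nat.lt_or_ge (u:ℕ) (v:ℕ) with h | h
    · exact key u v h
    · exact (key v u (by omega)).symm
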